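/- Let s be a positive integer, let G be a graph that is K_4-free and SDK_s-free, and let v be a vertex of G. Let B be a set of neighbors of v, and let W be a set of vertices disjoint from B ∪ {v} such that no vertex of W is adjacent to v. Let X ⊆ B be minimal under inclusion with the property that every vertex w ∈ W having a neighbor in B also has a neighbor in X. Then |X| ≤ R(4, R(4, s)). -/

import Mathlib

open SimpleGraph

/-- The Ramsey number `R(k, l)`: the least `N` such that every finite simple graph with at
least `N` vertices contains a clique with `k` vertices or an independent set with `l`
vertices (an independent set of size `l` is a clique of size `l` in the complement). -/
noncomputable def ramseyNumber (k l : ℕ) : ℕ :=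
  sInf {N | ∀ (V : Type) [Fintype V] (G : SimpleGraph V),
    N ≤ Fintype.card V →
      (∃ S : Finset V, G.IsNClique k S) ∨ (∃ S : Finset V, Gᶜ.IsNClique l S)}

/-- The one-subdivision of `K_{1,s}`: a center `Sum.inl ()`, middle vertices
`Sum.inr (Sum.inl i)` and leaves `Sum.inr (Sum.inr i)`; the center is adjacent to every
middle vertex, and the `i`-th middle vertex is adjacent to the `i`-th leaf. -/
def SDK (s : ℕ) : SimpleGraph (Unit ⊕ Fin s ⊕ Fin s) :=
  SimpleGraph.fromRel (fun a b =>
    (∃ i : Fin s, a = Sum.inl () ∧ b = Sum.inr (Sum.inl i)) ∨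
    (∃ i : Fin s, a = Sum.inr (Sum.inl i) ∧ b = Sum.inr (Sum.inr i)))

/-- `G` is `H`-free: no induced subgraph of `G` is isomorphic to `H`. -/
def IsFree {W V : Type*} (H : SimpleGraph W) (G : SimpleGraph V) : Prop :=
  ¬ Nonempty (H ↪g G)

/-- `nbhd G S` is the set of all vertices having a neighbour in `S`. -/
def nbhd {V : Type*} (G : SimpleGraph V) (S : Set V) : Set V :=
  {v | ∃ s ∈ S, G.Adj s v}


/-!
By minimality every `x ∈ X` has a private neighbour `p x ∈ W`, adjacent to `x` and to no other
vertex of `X`. As `G` has no `K₄`, if `|X| > R(4, R(4, s))` then `X` contains an independent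
set `Y` of size `R(4, s)`, and the (distinct) private neighbours of `Y` contain an independent
set `Z` of size `s`. Then `v`, the vertices `y ∈ Y` with `p y ∈ Z`, and `Z` induce `SDK_s`.
-/

lemma SimpleGraph.IsNClique.map_embedding {α β : Type*} {G : SimpleGraph α}
    {H : SimpleGraph β} {n : ℕ} {s : Finset α} (f : G ↪g H) (h : G.IsNClique n s) :
    H.IsNClique n (s.map f.toEmbedding) :=
  h.map.mono <| (map_le_iff_le_comap _ _ _).mpr fun _ _ hab => by simpa using hab

lemma IsFree.cliqueFree {V : Type*} {G : SimpleGraph V} {n : ℕ}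
    (h : IsFree (completeGraph (Fin n)) G) : G.CliqueFree n := by
  classical
  by_contra h'
  exact h ⟨topEmbeddingOfNotCliqueFree h'⟩

def IsRamseyBound (k l N : ℕ) : Prop :=
  ∀ (V : Type) [Fintype V] (G : SimpleGraph V),
    N ≤ Fintype.card V →
      (∃ S : Finset V, G.IsNClique k S) ∨ (∃ S : Finset V, Gᶜ.IsNClique l S)

namespace IsRamseyBound

variable {k l N N₁ N₂ : ℕ}

lemma exists_subset (h : IsRamseyBound k l N) {V : Type} [Fintype V] (G : SimpleGraph V)
    (A : Finset V) (hA : N ≤ A.card) :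
    (∃ S ⊆ A, G.IsNClique k S) ∨ ∃ S ⊆ A, G.IsNIndepSet l S := by
  rcases h A (G.induce A) (by simpa using hA) with ⟨S, hS⟩ | ⟨S, hS⟩
  · exact .inl ⟨_, Finset.coe_subset.mp (Finset.map_subtype_subset S),
      hS.map_embedding (Embedding.induce _)⟩
  · exact .inr ⟨_, Finset.coe_subset.mp (Finset.map_subtype_subset S),
      (isNClique_compl _).mp (hS.map_embedding (Embedding.complEquiv (Embedding.induce _)))⟩

-- Erdős–Szekeres: split the vertices other than `v` into neighbours and non-neighbours of `v`.
lemma succ_succ (h₁ : IsRamseyBound k (l + 1) N₁) (h₂ : IsRamseyBound (k + 1) l N₂) :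
    IsRamseyBound (k + 1) (l + 1) (N₁ + N₂ + 1) := by
  classical
  intro V _ G hV
  obtain ⟨v⟩ : Nonempty V := Fintype.card_pos_iff.mp (by omega)
  have hsplit : N₁ ≤ (G.neighborFinset v).card ∨ N₂ ≤ ((G.neighborFinset v)ᶜ.erase v).card := by
    have := Finset.card_erase_of_mem (s := (G.neighborFinset v)ᶜ) (a := v) (by simp)
    have := Finset.card_add_card_compl (G.neighborFinset v)
    omega
  rcases hsplit with hN | hN
  · rcases h₁.exists_subset G _ hN with ⟨S, hSN, hS⟩ | ⟨S, -, hS⟩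
    · exact .inl ⟨insert v S, hS.insert fun b hb => (G.mem_neighborFinset v b).mp (hSN hb)⟩
    · exact .inr ⟨S, (isNClique_compl _).mpr hS⟩
  · rcases h₂.exists_subset G _ hN with ⟨S, -, hS⟩ | ⟨S, hSN, hS⟩
    · exact .inl ⟨S, hS⟩
    · refine .inr ⟨insert v S, ((isNClique_compl _).mpr hS).insert fun b hb => ?_⟩
      have := hSN hb
      simp only [Finset.mem_erase, Finset.mem_compl, mem_neighborFinset] at this
      exact ⟨this.1.symm, this.2⟩

end IsRamseyBound

lemma exists_isRamseyBound (k l : ℕ) : ∃ N, IsRamseyBound k l N := by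
  induction k generalizing l with
  | zero => exact ⟨0, fun V _ G _ => .inl ⟨∅, by simp⟩⟩
  | succ k ihk =>
    induction l with
    | zero => exact ⟨0, fun V _ G _ => .inr ⟨∅, by simp⟩⟩
    | succ l ihl =>
      obtain ⟨N₁, h₁⟩ := ihk (l + 1)
      obtain ⟨N₂, h₂⟩ := ihl
      exact ⟨_, h₁.succ_succ h₂⟩

lemma isRamseyBound_ramseyNumber (k l : ℕ) : IsRamseyBound k l (ramseyNumber k l) :=
  Nat.sInf_mem (exists_isRamseyBound k l)

lemma SimpleGraph.CliqueFree.exists_isNIndepSet_subset {V : Type} [Fintype V]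
    {G : SimpleGraph V} {k l : ℕ} (hG : G.CliqueFree k) (A : Finset V)
    (hA : ramseyNumber k l ≤ A.card) : ∃ S ⊆ A, G.IsNIndepSet l S :=
  ((isRamseyBound_ramseyNumber k l).exists_subset G A hA).resolve_left
    fun ⟨S, _, hS⟩ => hG S hS

lemma exists_private_neighbor {V : Type*} {G : SimpleGraph V} {B W X : Set V}
    (hXcov : ∀ w ∈ W, (∃ b ∈ B, G.Adj w b) → ∃ x ∈ X, G.Adj w x)
    (hmin : ∀ X' : Set V, X' ⊂ X →
      ¬ ∀ w ∈ W, (∃ b ∈ B, G.Adj w b) → ∃ x ∈ X', G.Adj w x)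
    {x : V} (hx : x ∈ X) : ∃ w ∈ W, ∀ x' ∈ X, G.Adj w x' ↔ x' = x := by
  have hX' := hmin _ (Set.sdiff_singleton_ssubset.mpr hx)
  push Not at hX'
  obtain ⟨w, hwW, hwB, hw⟩ := hX'
  obtain ⟨x₀, hx₀, hwx₀⟩ := hXcov w hwW hwB
  have huniq : ∀ x' ∈ X, G.Adj w x' → x' = x := fun x' hx' h =>
    by_contra fun hne => hw x' ⟨hx', hne⟩ h
  exact ⟨w, hwW, fun x' hx' => ⟨huniq x' hx', fun h => h ▸ huniq x₀ hx₀ hwx₀ ▸ hwx₀⟩⟩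

lemma not_isFree_SDK {V : Type*} {G : SimpleGraph V} {s : ℕ} (c : V) (y w : Fin s → V)
    (hcy : ∀ i, G.Adj c (y i)) (hcw : ∀ i, ¬ G.Adj c (w i)) (hc : ∀ i, c ≠ w i)
    (hy : ∀ i j, ¬ G.Adj (y i) (y j)) (hw : ∀ i j, ¬ G.Adj (w i) (w j))
    (hyw : ∀ i j, G.Adj (y i) (w j) ↔ i = j) : ¬ IsFree (SDK s) G := by
  have hy_inj : y.Injective := fun i j h => ((hyw j i).mp (h ▸ (hyw i i).mpr rfl)).symm
  have hw_inj : w.Injective := fun i j h => (hyw i j).mp (h ▸ (hyw i i).mpr rfl)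
  have hyw_ne : ∀ i j, y i ≠ w j := fun i j h => hcw j (h ▸ hcy i)
  have hyc : ∀ i, y i ≠ c := fun i => (hcy i).ne'
  let f : Unit ⊕ Fin s ⊕ Fin s → V := Sum.elim (fun _ => c) (Sum.elim y w)
  have hf : f.Injective := by
    rintro (⟨⟩ | i | i) (⟨⟩ | j | j) h <;>
      simp_all [f, hw_inj.eq_iff, hy_inj.eq_iff, (hyw_ne _ _).symm, (hc _).symm]
  have hadj : ∀ a b, G.Adj (f a) (f b) ↔ (SDK s).Adj a b := by
    rintro (⟨⟩ | i | i) (⟨⟩ | j | j) <;>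
      simp [f, SDK, hcy, hcw, hy, hw, hyw, G.adj_comm _ c, G.adj_comm (w _) (y _), eq_comm]
  exact fun hfree => hfree ⟨⟨⟨f, hf⟩, hadj _ _⟩⟩

lemma not_isFree_SDK_of_privateNeighbors {V : Type*} {G : SimpleGraph V} {s : ℕ} (c : V)
    (p : V → V) {Y : Set V} {Z : Finset V} (hY : G.IsIndepSet Y) (hZ : G.IsNIndepSet s Z)
    (hZY : ∀ z ∈ Z, ∃ y ∈ Y, p y = z) (hcY : ∀ y ∈ Y, G.Adj c y)
    (hcZ : ∀ z ∈ Z, ¬ G.Adj c z) (hc : c ∉ Z)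
    (hp : ∀ y ∈ Y, ∀ y' ∈ Y, G.Adj (p y) y' ↔ y' = y) : ¬ IsFree (SDK s) G := by
  let e := (Z.equivFinOfCardEq hZ.card_eq).symm
  choose y hyY hpy using fun i => hZY _ (e i).2
  refine not_isFree_SDK c y (fun i => e i) (fun i => hcY _ (hyY i)) (fun i => hcZ _ (e i).2)
    (fun i h => hc (h ▸ (e i).2)) (fun i j h => hY (hyY i) (hyY j) h.ne h)
    (fun i j h => hZ.isIndepSet (e i).2 (e j).2 h.ne h) fun i j => ?_
  rw [← hpy j, G.adj_comm, hp _ (hyY j) _ (hyY i)]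
  exact ⟨fun h => e.injective (Subtype.ext (by rw [← hpy i, ← hpy j, h])), fun h => h ▸ rfl⟩

theorem stmt9_general (s : ℕ) (V : Type) [Fintype V] (G : SimpleGraph V)
    (hK4 : IsFree (completeGraph (Fin 4)) G) (hSDK : IsFree (SDK s) G)
    (v : V) (B : Set V) (hB : ∀ b ∈ B, G.Adj v b)
    (W : Set V) (hWv : v ∉ W)
    (hWadj : ∀ w ∈ W, ¬ G.Adj v w)
    (X : Set V) (hXB : X ⊆ B)
    (hXcov : ∀ w ∈ W, (∃ b ∈ B, G.Adj w b) → ∃ x ∈ X, G.Adj w x)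
    (hmin : ∀ X' : Set V, X' ⊂ X →
      ¬ ∀ w ∈ W, (∃ b ∈ B, G.Adj w b) → ∃ x ∈ X', G.Adj w x) :
    X.ncard ≤ ramseyNumber 4 (ramseyNumber 4 s) := by
  classical
  by_contra! hX
  have hG := hK4.cliqueFree
  choose! p hpW hp using fun x (hx : x ∈ X) => exists_private_neighbor hXcov hmin hx
  obtain ⟨Y, hYX, hY⟩ := hG.exists_isNIndepSet_subset X.toFinset
    (by rw [← Set.ncard_eq_toFinset_card']; exact hX.le)
  replace hYX : ∀ y ∈ Y, y ∈ X := fun y hy => Set.mem_toFinset.mp (hYX hy)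
  have hpY : Set.InjOn p Y := fun a ha b hb h =>
    (hp b (hYX b hb) a (hYX a ha)).mp (h ▸ (hp a (hYX a ha) a (hYX a ha)).mpr rfl)
  obtain ⟨Z, hZY, hZ⟩ := hG.exists_isNIndepSet_subset (Y.image p)
    (by rw [Finset.card_image_of_injOn hpY, hY.card_eq])
  replace hZY : ∀ z ∈ Z, ∃ y ∈ Y, p y = z := fun z hz => Finset.mem_image.mp (hZY hz)
  have hZW : ∀ z ∈ Z, z ∈ W := fun z hz => by
    obtain ⟨y, hy, rfl⟩ := hZY z hz
    exact hpW y (hYX y hy)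
  exact not_isFree_SDK_of_privateNeighbors v p hY.isIndepSet hZ hZY
    (fun y hy => hB y (hXB (hYX y hy))) (fun z hz => hWadj z (hZW z hz))
    (fun hv => hWv (hZW v hv)) (fun y hy y' hy' => hp y (hYX y hy) y' (hYX y' hy')) hSDK

theorem stmt9 (s : ℕ) (hs : 1 ≤ s) (V : Type) [Fintype V] (G : SimpleGraph V)
    (hK4 : IsFree (completeGraph (Fin 4)) G) (hSDK : IsFree (SDK s) G)
    (v : V) (B : Set V) (hB : ∀ b ∈ B, G.Adj v b)
    (W : Set V) (hWv : v ∉ W) (hWB : Disjoint W B)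
    (hWadj : ∀ w ∈ W, ¬ G.Adj v w)
    (X : Set V) (hXB : X ⊆ B)
    (hXcov : ∀ w ∈ W, (∃ b ∈ B, G.Adj w b) → ∃ x ∈ X, G.Adj w x)
    (hmin : ∀ X' : Set V, X' ⊂ X →
      ¬ ∀ w ∈ W, (∃ b ∈ B, G.Adj w b) → ∃ x ∈ X', G.Adj w x) :
    X.ncard ≤ ramseyNumber 4 (ramseyNumber 4 s) :=
  stmt9_general s V G hK4 hSDK v B hB W hWv hWadj X hXB hXcov hmin
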